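/- Let X be a metric space, Ω ⊆ X a set, L > 0, and let μ ≤ 0 be a real number. Let f : Ω → ℝ be L-Lipschitz and μ-concave on Ω. Let a ∈ [0, 1), b ≥ 0, and let φ : ℝ → ℝ be twice continuously differentiable with 1 − a ≤ φ′(t) ≤ 1 + a and |φ″(t)| ≤ b for all t ∈ ℝ. Then the composition φ ∘ f is (b·L² + (1−a)·μ)-concave on Ω. -/

import Mathlib

/-!
Along a unit-speed geodesic, `g = f ∘ γ` is `L`-Lipschitz and `g - μ t²/2` is concave, while
`φ` is increasing with slope at least `1 - a` and `φ - b x²/2` is concave. At a convex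
combination `p x + q y`, the concavity defect of `g` is `D = -μ p q (x - y)²/2 ≥ 0`, which
`φ` turns into a gain of at least `(1 - a) D`; the concavity defect of `φ` at `g x, g y` is at
most `b p q (g x - g y)²/2 ≤ b L² p q (x - y)²/2`.
-/

/-- A unit-speed geodesic (on `[a,b]`) in a metric space. -/
def IsUnitSpeedGeodesic {X : Type*} [MetricSpace X] (γ : ℝ → X) (a b : ℝ) : Prop :=
  ∀ s ∈ Set.Icc a b, ∀ t ∈ Set.Icc a b, dist (γ s) (γ t) = |s - t|

/-- `f` is `λ`-concave on `Ω`: along every unit-speed geodesic with image in `Ω`,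
`t ↦ f (γ t) - (λ/2) t²` is concave. -/
def LambdaConcaveOn {X : Type*} [MetricSpace X] (lam : ℝ) (f : X → ℝ) (Ω : Set X) : Prop :=
  ∀ (γ : ℝ → X) (a b : ℝ), a ≤ b → IsUnitSpeedGeodesic γ a b →
    (∀ t ∈ Set.Icc a b, γ t ∈ Ω) →
    ConcaveOn ℝ (Set.Icc a b) (fun t => f (γ t) - lam / 2 * t ^ 2)

open Set

theorem concaveOn_sub_sq_iff {s : Set ℝ} {g : ℝ → ℝ} {lam : ℝ} :
    ConcaveOn ℝ s (fun t => g t - lam / 2 * t ^ 2) ↔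
      Convex ℝ s ∧ ∀ ⦃x⦄, x ∈ s → ∀ ⦃y⦄, y ∈ s → ∀ ⦃p q : ℝ⦄, 0 ≤ p → 0 ≤ q → p + q = 1 →
        p * g x + q * g y ≤ g (p * x + q * y) + lam / 2 * (p * q * (x - y) ^ 2) := by
  refine and_congr_right fun _ => forall₂_congr fun x _ => forall₂_congr fun y _ =>
    forall₂_congr fun p q => forall₃_congr fun _ _ hpq => ?_
  obtain rfl : q = 1 - p := by linarith
  simp only [smul_eq_mul]
  constructor <;> intro h <;> linarith

theorem concaveOn_univ_sub_sq_of_deriv2_le {φ : ℝ → ℝ} {b : ℝ} (hφ : Differentiable ℝ φ)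
    (hφ' : Differentiable ℝ (deriv φ)) (hφ'' : ∀ x, deriv (deriv φ) x ≤ b) :
    ConcaveOn ℝ univ (fun x => φ x - b / 2 * x ^ 2) := by
  have hderiv : deriv (fun x => φ x - b / 2 * x ^ 2) = fun x => deriv φ x - b * x := by
    funext x
    have h : HasDerivAt (fun x => φ x - b / 2 * x ^ 2) (deriv φ x - b / 2 * (2 * x ^ 1)) x :=
      (hφ x).hasDerivAt.sub ((hasDerivAt_pow 2 x).const_mul (b / 2))
    rw [h.deriv]
    ring
  refine concaveOn_univ_of_deriv2_nonpos (hφ.sub ((differentiable_pow 2).const_mul _))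
    (hderiv ▸ hφ'.sub (differentiable_id.const_mul _)) fun x => ?_
  have h : HasDerivAt (fun x => deriv φ x - b * x) (deriv (deriv φ) x - b * 1) x :=
    (hφ' x).hasDerivAt.sub ((hasDerivAt_id x).const_mul b)
  rw [Function.iterate_succ_apply, Function.iterate_one, hderiv, h.deriv]
  linarith [hφ'' x]

theorem concaveOn_comp_sub_sq {s : Set ℝ} {g φ : ℝ → ℝ} {L μ b c : ℝ}
    (hg : ConcaveOn ℝ s (fun t => g t - μ / 2 * t ^ 2)) (hμ : μ ≤ 0)
    (hgLip : ∀ x ∈ s, ∀ y ∈ s, |g x - g y| ≤ L * |x - y|)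
    (hφ : ConcaveOn ℝ univ (fun x => φ x - b / 2 * x ^ 2)) (hb : 0 ≤ b)
    (hc : 0 ≤ c) (hφ_slope : ∀ ⦃x y⦄, x ≤ y → c * (y - x) ≤ φ y - φ x) :
    ConcaveOn ℝ s (fun t => φ (g t) - (b * L ^ 2 + c * μ) / 2 * t ^ 2) := by
  rw [concaveOn_sub_sq_iff] at hg hφ ⊢
  refine ⟨hg.1, fun x hx y hy p q hp hq hpq => ?_⟩
  set A := p * g x + q * g y with hA_def
  set D := -(μ / 2) * (p * q * (x - y) ^ 2) with hD_def
  have hpq0 : 0 ≤ p * q := mul_nonneg hp hq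
  have hD : 0 ≤ D := mul_nonneg (by linarith) (by positivity)
  have hA : A + D ≤ g (p * x + q * y) := by linarith [hg.2 hx hy hp hq hpq]
  have hgain : φ A + c * D ≤ φ (g (p * x + q * y)) := by
    have hmono : 0 ≤ c * (g (p * x + q * y) - (A + D)) := mul_nonneg hc (by linarith)
    linarith [hφ_slope (le_add_of_nonneg_right hD : A ≤ A + D), hφ_slope hA]
  have hsq : (g x - g y) ^ 2 ≤ L ^ 2 * (x - y) ^ 2 := by
    rw [← sq_abs, ← sq_abs (x - y), ← mul_pow]
    exact pow_le_pow_left₀ (abs_nonneg _) (hgLip x hx y hy) 2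
  have hdefect : p * φ (g x) + q * φ (g y) ≤ φ A + b / 2 * (p * q * (L ^ 2 * (x - y) ^ 2)) :=
    (hφ.2 (mem_univ _) (mem_univ _) hp hq hpq).trans (by gcongr)
  have hcD : c * D = -(c * μ) / 2 * (p * q * (x - y) ^ 2) := by ring
  linarith

theorem concavity_of_reparametrized {X : Type*} [MetricSpace X] (Ω : Set X)
    (L μ : ℝ) (hμ : μ ≤ 0) (f : X → ℝ)
    (hfLip : ∀ x ∈ Ω, ∀ y ∈ Ω, |f x - f y| ≤ L * dist x y)
    (hfConc : LambdaConcaveOn μ f Ω)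
    (a b : ℝ) (ha1 : a < 1) (hb : 0 ≤ b)
    (φ : ℝ → ℝ) (hφ : ContDiff ℝ 2 φ)
    (hφ' : ∀ t : ℝ, 1 - a ≤ deriv φ t ∧ deriv φ t ≤ 1 + a)
    (hφ'' : ∀ t : ℝ, |deriv (deriv φ) t| ≤ b) :
    LambdaConcaveOn (b * L ^ 2 + (1 - a) * μ) (φ ∘ f) Ω := by
  have hφd : Differentiable ℝ φ := hφ.differentiable (by norm_num)
  have hφ_semiconcave : ConcaveOn ℝ univ (fun x => φ x - b / 2 * x ^ 2) :=
    concaveOn_univ_sub_sq_of_deriv2_le hφd hφ.differentiable_deriv_two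
      fun t => (abs_le.mp (hφ'' t)).2
  intro γ α β hαβ hγ hγΩ
  exact concaveOn_comp_sub_sq (hfConc γ α β hαβ hγ hγΩ) hμ
    (fun x hx y hy => hγ x hx y hy ▸ hfLip _ (hγΩ x hx) _ (hγΩ y hy))
    hφ_semiconcave hb (by linarith)
    (mul_sub_le_image_sub_of_le_deriv hφd fun t => (hφ' t).1)
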